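/- Let G = (V,E) be a finite simple undirected graph with positive edge weights and unique shortest paths, let s, v, x, y be vertices with d_G(v,x) ≤ d_G(s,v), d_G(x,y) ≤ 2 · d_G(s,v), and d_G(y,s) ≤ 4 · d_G(s,v), and let f ∈ E be an edge lying on the unique shortest path π(s,v) such that s and v are connected in G − f. Then d_{G−f}(v,x) + d_{G−f}(x,y) + d_{G−f}(y,s) ≤ 13 · d_{G−f}(s,v). (This is the mathematical core of Lemma 4.1 / Theorem 2: the distance estimate returned via the two-level landmark vertices x and y has multiplicative stretch at most 13.) -/

import Mathlib

open scoped ENNReal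

variable {V : Type*}

/-- The total weight of a walk: the sum of the weights of its edges (in `ℝ≥0∞`). -/
noncomputable def walkWeight {G : SimpleGraph V} (wt : Sym2 V → NNReal)
    {u v : V} (p : G.Walk u v) : ℝ≥0∞ :=
  (p.edges.map (fun e => (wt e : ℝ≥0∞))).sum

/-- The weighted shortest-path distance: the infimum over all walks from `u` to `v`
of their total weight (in `ℝ≥0∞`, so it is `∞` if `u` and `v` are not connected). -/
noncomputable def wdist (G : SimpleGraph V) (wt : Sym2 V → NNReal) (u v : V) : ℝ≥0∞ :=
  ⨅ p : G.Walk u v, walkWeight wt p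

/-- `G` has unique shortest paths: for every pair of connected vertices there is exactly
one walk of minimum total weight. -/
def HasUniqueShortestPaths (G : SimpleGraph V) (wt : Sym2 V → NNReal) : Prop :=
  ∀ u v : V, G.Reachable u v →
    ∃! p : G.Walk u v, walkWeight wt p = wdist G wt u v

/-!
Write `f = s(a, b)`, `d = d_G(s, v)`, `D = d_{G-f}(s, v)` and `K = d_{G-f}(a, b)`.
Rerouting a shortest `u`–`w` path through a shortest `a`–`b` detour in `G - f` wherever it used
`f` gives `d_{G-f}(u, w) ≤ d_G(u, w) + K`. Since unique shortest paths are paths, `π(s, v)`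
crosses `f` exactly once, and walking back from `a` to `s` along it, then to `v` in `G - f`,
then back to `b` along it shows `K ≤ d + D`. The three hypotheses bound the left-hand side by
`7 d + 3 K ≤ 10 d + 3 D`, and `d ≤ D` since deleting an edge cannot shorten distances.
-/

open SimpleGraph

section

variable {G : SimpleGraph V} (wt : Sym2 V → NNReal)

lemma walkWeight_cons {u v w : V} (h : G.Adj u v) (p : G.Walk v w) :
    walkWeight wt (Walk.cons h p) = wt s(u, v) + walkWeight wt p := by
  simp [walkWeight]

lemma walkWeight_append {u v w : V} (p : G.Walk u v) (q : G.Walk v w) :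
    walkWeight wt (p.append q) = walkWeight wt p + walkWeight wt q := by
  simp [walkWeight, Walk.edges_append]

lemma walkWeight_reverse {u v : V} (p : G.Walk u v) :
    walkWeight wt p.reverse = walkWeight wt p := by
  simp [walkWeight, Walk.edges_reverse, List.sum_reverse]

lemma walkWeight_transfer {H : SimpleGraph V} {u v : V} (p : G.Walk u v)
    (hp : ∀ e ∈ p.edges, e ∈ H.edgeSet) :
    walkWeight wt (p.transfer H hp) = walkWeight wt p := by
  simp [walkWeight, Walk.edges_transfer]

lemma walkWeight_bypass_le [DecidableEq V] {u v : V} (p : G.Walk u v) :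
    walkWeight wt p.bypass ≤ walkWeight wt p :=
  ((p.edges_bypass_sublist_edges).map _).sum_le_sum fun _ _ => zero_le

lemma wdist_le_walkWeight {u v : V} (p : G.Walk u v) : wdist G wt u v ≤ walkWeight wt p :=
  iInf_le _ p

lemma wdist_comm (u v : V) : wdist G wt u v = wdist G wt v u := by
  have key : ∀ a b : V, wdist G wt a b ≤ wdist G wt b a := fun a b =>
    le_iInf fun p => (wdist_le_walkWeight wt p.reverse).trans_eq (walkWeight_reverse wt p)
  exact (key u v).antisymm (key v u)

lemma wdist_eq_of_sym2_eq {a b c d : V} (h : s(c, d) = s(a, b)) :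
    wdist G wt c d = wdist G wt a b := by
  rcases Sym2.eq_iff.1 h with ⟨rfl, rfl⟩ | ⟨rfl, rfl⟩
  · rfl
  · exact wdist_comm wt _ _

lemma wdist_triangle (u v w : V) : wdist G wt u w ≤ wdist G wt u v + wdist G wt v w := by
  simp only [wdist, ENNReal.iInf_add, ENNReal.add_iInf]
  exact le_iInf₂ fun q p => (wdist_le_walkWeight wt (p.append q)).trans_eq
    (walkWeight_append wt p q)

lemma wdist_le_wdist_deleteEdges (S : Set (Sym2 V)) (u v : V) :
    wdist G wt u v ≤ wdist (G.deleteEdges S) wt u v :=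
  le_iInf fun p =>
    (wdist_le_walkWeight wt (p.mapLe (G.deleteEdges_le S))).trans_eq (by simp [walkWeight])

lemma wdist_deleteEdges_le_walkWeight {e : Sym2 V} {u w : V} (p : G.Walk u w)
    (hp : e ∉ p.edges) : wdist (G.deleteEdges {e}) wt u w ≤ walkWeight wt p := by
  have hp' : ∀ e' ∈ p.edges, e' ∈ (G.deleteEdges {e}).edgeSet := fun e' he' => by
    rw [edgeSet_deleteEdges]
    exact ⟨p.edges_subset_edgeSet he', fun h => hp (Set.mem_singleton_iff.1 h ▸ he')⟩
  exact (wdist_le_walkWeight wt (p.transfer _ hp')).trans_eq (walkWeight_transfer wt p hp')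

lemma SimpleGraph.Walk.exists_eq_append_cons_of_mem_edges {e : Sym2 V} {u w : V} (p : G.Walk u w)
    (he : e ∈ p.edges) : ∃ (c d : V) (q : G.Walk u c) (h : G.Adj c d) (r : G.Walk d w),
      s(c, d) = e ∧ p = q.append (Walk.cons h r) := by
  induction p with
  | nil => simp at he
  | @cons u v w h p ih =>
    by_cases hfirst : s(u, v) = e
    · exact ⟨u, v, Walk.nil, h, p, hfirst, rfl⟩
    · obtain ⟨c, d, q, h', r, hcd, rfl⟩ :=
        ih ((List.mem_cons.1 (Walk.edges_cons h p ▸ he)).resolve_left (Ne.symm hfirst))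
      exact ⟨c, d, Walk.cons h q, h', r, hcd, rfl⟩

lemma SimpleGraph.Walk.IsTrail.exists_split_of_mem_edges {e : Sym2 V} {u w : V} {p : G.Walk u w}
    (hp : p.IsTrail) (he : e ∈ p.edges) : ∃ (c d : V) (q : G.Walk u c) (r : G.Walk d w),
      s(c, d) = e ∧ e ∉ q.edges ∧ e ∉ r.edges ∧
        walkWeight wt q + walkWeight wt r ≤ walkWeight wt p := by
  obtain ⟨c, d, q, h, r, rfl, rfl⟩ := p.exists_eq_append_cons_of_mem_edges he
  have hnodup := hp.edges_nodup
  rw [Walk.edges_append, Walk.edges_cons, List.nodup_append, List.nodup_cons] at hnodup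
  refine ⟨c, d, q, r, rfl, fun hq => hnodup.2.2 _ hq _ List.mem_cons_self rfl,
    hnodup.2.1.1, ?_⟩
  rw [walkWeight_append, walkWeight_cons, add_left_comm]
  exact le_add_self

lemma wdist_deleteEdges_le_walkWeight_add_of_isTrail {a b u w : V} {p : G.Walk u w}
    (hp : p.IsTrail) : wdist (G.deleteEdges {s(a, b)}) wt u w ≤
      walkWeight wt p + wdist (G.deleteEdges {s(a, b)}) wt a b := by
  by_cases he : s(a, b) ∈ p.edges
  · obtain ⟨c, d, q, r, hcd, hq, hr, hqr⟩ := hp.exists_split_of_mem_edges wt he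
    calc wdist (G.deleteEdges {s(a, b)}) wt u w
        ≤ wdist (G.deleteEdges {s(a, b)}) wt u c + wdist (G.deleteEdges {s(a, b)}) wt c d +
            wdist (G.deleteEdges {s(a, b)}) wt d w :=
          (wdist_triangle wt u d w).trans (add_le_add (wdist_triangle wt u c d) le_rfl)
      _ ≤ walkWeight wt q + wdist (G.deleteEdges {s(a, b)}) wt a b + walkWeight wt r := by
          rw [wdist_eq_of_sym2_eq wt hcd]
          gcongr
          · exact wdist_deleteEdges_le_walkWeight wt q hq
          · exact wdist_deleteEdges_le_walkWeight wt r hr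
      _ ≤ walkWeight wt p + wdist (G.deleteEdges {s(a, b)}) wt a b := by
          rw [add_right_comm]
          gcongr
  · exact (wdist_deleteEdges_le_walkWeight wt p he).trans le_self_add

lemma wdist_deleteEdges_le_wdist_add (a b u w : V) :
    wdist (G.deleteEdges {s(a, b)}) wt u w ≤
      wdist G wt u w + wdist (G.deleteEdges {s(a, b)}) wt a b := by
  classical
  refine (le_iInf fun p => ?_).trans_eq ENNReal.iInf_add.symm
  exact (wdist_deleteEdges_le_walkWeight_add_of_isTrail wt p.bypass_isPath.isTrail).trans
    (add_le_add (walkWeight_bypass_le wt p) le_rfl)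

lemma wdist_deleteEdges_self_le_of_isTrail {a b s v : V} {p : G.Walk s v}
    (hp : p.IsTrail) (hab : s(a, b) ∈ p.edges) :
    wdist (G.deleteEdges {s(a, b)}) wt a b ≤
      walkWeight wt p + wdist (G.deleteEdges {s(a, b)}) wt s v := by
  obtain ⟨c, d, q, r, hcd, hq, hr, hqr⟩ := hp.exists_split_of_mem_edges wt hab
  calc wdist (G.deleteEdges {s(a, b)}) wt a b
      = wdist (G.deleteEdges {s(a, b)}) wt c d := (wdist_eq_of_sym2_eq wt hcd).symm
    _ ≤ wdist (G.deleteEdges {s(a, b)}) wt c s + wdist (G.deleteEdges {s(a, b)}) wt s v +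
          wdist (G.deleteEdges {s(a, b)}) wt v d :=
        (wdist_triangle wt c v d).trans (add_le_add (wdist_triangle wt c s v) le_rfl)
    _ ≤ walkWeight wt q + wdist (G.deleteEdges {s(a, b)}) wt s v + walkWeight wt r := by
        rw [wdist_comm wt c s, wdist_comm wt v d]
        gcongr
        · exact wdist_deleteEdges_le_walkWeight wt q hq
        · exact wdist_deleteEdges_le_walkWeight wt r hr
    _ ≤ walkWeight wt p + wdist (G.deleteEdges {s(a, b)}) wt s v := by
        rw [add_right_comm]
        gcongr

lemma HasUniqueShortestPaths.isPath {wt : Sym2 V → NNReal} (huniq : HasUniqueShortestPaths G wt)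
    {u v : V} {p : G.Walk u v} (hp : walkWeight wt p = wdist G wt u v) : p.IsPath := by
  classical
  have hbypass : walkWeight wt p.bypass = wdist G wt u v :=
    le_antisymm ((walkWeight_bypass_le wt p).trans_eq hp) (wdist_le_walkWeight wt _)
  obtain ⟨_, -, hunique⟩ := huniq u v ⟨p⟩
  exact (hunique _ hbypass).trans (hunique _ hp).symm ▸ p.bypass_isPath

end

theorem stmt19_general (G : SimpleGraph V) (wt : Sym2 V → NNReal)
    (huniq : HasUniqueShortestPaths G wt)
    (s v x y : V)
    (hvx : wdist G wt v x ≤ wdist G wt s v)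
    (hxy : wdist G wt x y ≤ 2 * wdist G wt s v)
    (hys : wdist G wt y s ≤ 4 * wdist G wt s v)
    (f : Sym2 V)
    (qsv : G.Walk s v) (hqsv : walkWeight wt qsv = wdist G wt s v)
    (hfq : f ∈ qsv.edges) :
    wdist (G.deleteEdges {f}) wt v x + wdist (G.deleteEdges {f}) wt x y +
        wdist (G.deleteEdges {f}) wt y s ≤
      13 * wdist (G.deleteEdges {f}) wt s v := by
  induction f using Sym2.ind with
  | _ a b =>
  set d := wdist G wt s v
  set D := wdist (G.deleteEdges {s(a, b)}) wt s v
  set K := wdist (G.deleteEdges {s(a, b)}) wt a b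
  have hdD : d ≤ D := wdist_le_wdist_deleteEdges wt _ s v
  have hK : K ≤ d + D :=
    hqsv ▸ wdist_deleteEdges_self_le_of_isTrail wt (huniq.isPath hqsv).isTrail hfq
  calc _ ≤ (wdist G wt v x + K) + (wdist G wt x y + K) + (wdist G wt y s + K) := by
        gcongr <;> exact wdist_deleteEdges_le_wdist_add wt a b _ _
    _ ≤ (d + (d + D)) + (2 * d + (d + D)) + (4 * d + (d + D)) := by gcongr
    _ = 10 * d + 3 * D := by ring
    _ ≤ 10 * D + 3 * D := by gcongr
    _ = 13 * D := by ring

theorem stmt19 [Fintype V] [DecidableEq V] (G : SimpleGraph V) (wt : Sym2 V → NNReal)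
    (hwt : ∀ e ∈ G.edgeSet, 0 < wt e)
    (huniq : HasUniqueShortestPaths G wt)
    (s v x y : V)
    (hvx : wdist G wt v x ≤ wdist G wt s v)
    (hxy : wdist G wt x y ≤ 2 * wdist G wt s v)
    (hys : wdist G wt y s ≤ 4 * wdist G wt s v)
    (f : Sym2 V) (hf : f ∈ G.edgeSet)
    (qsv : G.Walk s v) (hqsv : walkWeight wt qsv = wdist G wt s v)
    (hfq : f ∈ qsv.edges)
    (hconn : (G.deleteEdges {f}).Reachable s v) :
    wdist (G.deleteEdges {f}) wt v x + wdist (G.deleteEdges {f}) wt x y +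
        wdist (G.deleteEdges {f}) wt y s ≤
      13 * wdist (G.deleteEdges {f}) wt s v :=
  stmt19_general G wt huniq s v x y hvx hxy hys f qsv hqsv hfq
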